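/- arXiv:0811.4712 — 4 statements merged into one kernel-verified Lean document; each statement's English description precedes it below -/
import Mathlib

section
/- The set of tree-expanded invertible series {A = Σ_{t∈Y} A_t t with A_| = 1}, with coefficients in a commutative unital ring and with multiplication induced linearly by the over product on trees, forms a group. -/
/-- Planar binary trees: a leaf, or an internal vertex with two subtrees. -/
inductive PBT : Type
  | leaf : PBT
  | node : PBT → PBT → PBT
  deriving DecidableEq

namespace PBT

/-- Number of internal vertices of a planar binary tree. -/
def size : PBT → ℕ
  | leaf => 0
  | node l r => size l + size r + 1

/-- `under u v` ("u ∖ v") grafts `v` at the rightmost leaf of `u`. -/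
def under : PBT → PBT → PBT
  | leaf, v => v
  | node l r, v => node l (under r v)

/-- `over u v` ("u / v") grafts `u` at the leftmost leaf of `v`. -/
def overGraft (u : PBT) : PBT → PBT
  | leaf => u
  | node l r => node (overGraft u l) r

/-- Number of internal vertices on the rightmost path (right spine). -/
def rightSpine : PBT → ℕ
  | leaf => 0
  | node _ r => rightSpine r + 1

/-- The left comb with `p` internal vertices. -/
def leftComb : ℕ → PBT
  | 0 => leaf
  | p + 1 => node (leftComb p) leaf

/-- The right comb with `q` internal vertices. -/
def rightComb : ℕ → PBT
  | 0 => leaf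
  | q + 1 => node leaf (rightComb q)

/-- The list of all factorizations `t = u ∖ v` (each exactly once). -/
def underFactors : PBT → List (PBT × PBT)
  | leaf => [(leaf, leaf)]
  | node l r => (leaf, node l r) :: (underFactors r).map (fun p => (node l p.1, p.2))

/-- The list of all factorizations `t = u / v` (each exactly once). -/
def overFactors : PBT → List (PBT × PBT)
  | leaf => [(leaf, leaf)]
  | node l r => (node l r, leaf) :: (overFactors l).map (fun p => (p.1, node p.2 r))

/-- Convolution of tree-expanded series dual to the over product:
`(A / B)_w = Σ_{s / t = w} A_s B_t`. -/
def overConv {R : Type*} [CommRing R] (f g : PBT → R) (w : PBT) : R :=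
  ((overFactors w).map (fun p => f p.1 * g p.2)).sum

/-- Convolution of tree-expanded series dual to the under product:
`(A ∖ B)_w = Σ_{s ∖ t = w} A_s B_t`. -/
def underConv {R : Type*} [CommRing R] (f g : PBT → R) (w : PBT) : R :=
  ((underFactors w).map (fun p => f p.1 * g p.2)).sum

/-- The list of all planar binary trees with `n` internal vertices. -/
def treesOfSize : ℕ → List PBT
  | 0 => [leaf]
  | n + 1 =>
    (List.range (n + 1)).attach.flatMap (fun i =>
      (treesOfSize i.1).flatMap (fun l =>
        (treesOfSize (n - i.1)).map (fun r => node l r)))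
  termination_by n => n
  decreasing_by
  · exact Nat.lt_succ_of_le (Nat.sub_le _ _)
  · exact List.mem_range.mp i.2

/-- `treePow B t` is the series `B^t = μ_t(B,…,B)`, the substitution of the
series `B` in all internal vertices of `t` (duplicial operad composition),
using the decomposition `l ∨ r = (l / Y) ∖ r`. -/
def treePow {R : Type*} [CommRing R] (B : PBT → R) : PBT → PBT → R
  | leaf => fun w => if w = leaf then 1 else 0
  | node l r => underConv (overConv (treePow B l) B) (treePow B r)

/-- Composition of tree-expanded series: `(A ∘ B)_w = Σ_t A_t (B^t)_w`,
where only trees with at most `|w|` vertices can contribute. -/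
def comp {R : Type*} [CommRing R] (A B : PBT → R) (w : PBT) : R :=
  (((List.range (size w + 1)).flatMap treesOfSize).map
    (fun t => A t * treePow B t w)).sum

/-- The series reduced to the one-vertex tree `Y`. -/
def Yser {R : Type*} [CommRing R] : PBT → R :=
  fun t => if t = node leaf leaf then 1 else 0

/-- The series reduced to the root tree `|` (unit for the over/under products). -/
def unitSer {R : Type*} [CommRing R] : PBT → R :=
  fun t => if t = leaf then 1 else 0

/-- Suspension of a tree-expanded series: the coefficient on a tree with `n`
internal vertices is multiplied by `(-1)^(n-1)`. -/
def susp {R : Type*} [CommRing R] (A : PBT → R) : PBT → R :=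
  fun t => (-1 : R) ^ (size t + 1) * A t

/-- One covering step of the Tamari order: a right rotation
`(a ∨ b) ∨ c ⟶ a ∨ (b ∨ c)` somewhere in the tree. -/
inductive TamariStep : PBT → PBT → Prop
  | rot (a b c : PBT) : TamariStep (node (node a b) c) (node a (node b c))
  | left {l l' : PBT} (r : PBT) : TamariStep l l' → TamariStep (node l r) (node l' r)
  | right (l : PBT) {r r' : PBT} : TamariStep r r' → TamariStep (node l r) (node l r')

/-- The Tamari partial order on planar binary trees. -/
def tle : PBT → PBT → Prop := Relation.ReflTransGen TamariStep

end PBT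

/-! The over product of trees is associative with unit `|`, and the factorizations of
`l ∨ r` are `(l ∨ r) / |` together with `s / (t ∨ r)` for every `s / t = l`. This gives a
one-step recursion for `overConv` along the left branch, from which associativity and the unit
laws follow by induction. The same recursion defines a left inverse of any `A` with `A_| = 1`
coefficient by coefficient, and in a monoid an element whose left inverse again has a left
inverse is invertible. -/

namespace PBT

variable {R : Type*} [CommRing R]

theorem size_add_size_of_mem_overFactors {w : PBT} {p : PBT × PBT} (hp : p ∈ overFactors w) :
    size p.1 + size p.2 = size w := by
  induction w generalizing p with
  | leaf => simp_all [overFactors, size]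
  | node l r ihl _ =>
    simp only [overFactors, List.mem_cons, List.mem_map] at hp
    rcases hp with rfl | ⟨q, hq, rfl⟩
    · simp [size]
    · have := ihl hq
      simp only [size]
      omega

theorem overConv_leaf (f g : PBT → R) : overConv f g leaf = f leaf * g leaf := by
  simp [overConv, overFactors]

theorem overConv_node (f g : PBT → R) (l r : PBT) :
    overConv f g (node l r) = f (node l r) * g leaf + overConv f (fun t => g (node t r)) l := by
  simp [overConv, overFactors, Function.comp_def]

theorem overConv_add_right (f g h : PBT → R) :
    overConv f (g + h) = overConv f g + overConv f h := by
  funext w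
  simp [overConv, mul_add, List.sum_map_add]

theorem overConv_mul_const_right (f g : PBT → R) (c : R) (w : PBT) :
    overConv f (fun t => g t * c) w = overConv f g w * c := by
  simp only [overConv, ← mul_assoc, List.sum_map_mul_right]

theorem overConv_zero_right (f : PBT → R) (w : PBT) : overConv f (fun _ => 0) w = 0 := by
  simp [overConv]

theorem overConv_assoc (A B C : PBT → R) :
    overConv (overConv A B) C = overConv A (overConv B C) := by
  funext w
  induction w generalizing C with
  | leaf => simp only [overConv_leaf]; ring
  | node l r ihl _ =>
    have hBC : (fun t => overConv B C (node t r)) =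
        (fun t => B (node t r) * C leaf) + overConv B (fun t => C (node t r)) :=
      funext fun t => overConv_node B C t r
    rw [overConv_node, overConv_node, overConv_node, hBC, overConv_add_right, Pi.add_apply,
      overConv_mul_const_right, overConv_leaf, ihl]
    ring

theorem unitSer_overConv (A : PBT → R) : overConv unitSer A = A := by
  funext w
  induction w generalizing A with
  | leaf => simp [overConv_leaf, unitSer]
  | node l r ihl _ => simp [overConv_node, ihl, unitSer]

theorem overConv_unitSer (A : PBT → R) : overConv A unitSer = A := by
  funext w
  cases w with
  | leaf => simp [overConv_leaf, unitSer]
  | node l r => simp [overConv_node, overConv_zero_right, unitSer]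

/-- The coefficients of the left inverse, solving `(overInv A / A)_(l ∨ r) = 0` for the
coefficient on `l ∨ r`, which enters with factor `A_| = 1`. -/
def overInv (A : PBT → R) : PBT → R
  | leaf => 1
  | node l r => -((overFactors l).attach.map (fun p => overInv A p.1.1 * A (node p.1.2 r))).sum
termination_by t => size t
decreasing_by
  have := size_add_size_of_mem_overFactors p.2
  simp only [size]
  omega

theorem overInv_leaf (A : PBT → R) : overInv A leaf = 1 := by
  simp [overInv]

theorem overInv_node (A : PBT → R) (l r : PBT) :
    overInv A (node l r) = -overConv (overInv A) (fun t => A (node t r)) l := by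
  rw [overInv, overConv,
    List.attach_map_val (f := fun p : PBT × PBT => overInv A p.1 * A (node p.2 r))]

theorem overInv_overConv (A : PBT → R) (hA : A leaf = 1) : overConv (overInv A) A = unitSer := by
  funext w
  cases w with
  | leaf => simp [overConv_leaf, overInv_leaf, hA, unitSer]
  | node l r => simp [overConv_node, overInv_node, hA, unitSer]

end PBT

open PBT in
/-- tree-expanded series with coefficient `1` on the root tree,
with the convolution induced by the over product, form a group: the product is
closed, associative, has the series `|` as unit, and every element has a
two-sided inverse. -/
theorem group_of_over_series (R : Type*) [CommRing R] :
    (∀ A B : PBT → R, A PBT.leaf = 1 → B PBT.leaf = 1 →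
      overConv A B PBT.leaf = 1) ∧
    (∀ A B C : PBT → R, overConv (overConv A B) C = overConv A (overConv B C)) ∧
    (∀ A : PBT → R, overConv (unitSer) A = A ∧ overConv A (unitSer) = A) ∧
    (∀ A : PBT → R, A PBT.leaf = 1 →
      ∃ B : PBT → R, B PBT.leaf = 1 ∧
        overConv A B = unitSer ∧ overConv B A = unitSer) := by
  refine ⟨fun A B hA hB => by rw [overConv_leaf, hA, hB, mul_one], overConv_assoc,
    fun A => ⟨unitSer_overConv A, overConv_unitSer A⟩, fun A hA => ?_⟩
  set B := overInv A
  have hB : B leaf = 1 := overInv_leaf A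
  have hBA : overConv B A = unitSer := overInv_overConv A hA
  have hCB : overConv (overInv B) B = unitSer := overInv_overConv B hB
  have hCA : overInv B = A := by
    calc overInv B = overConv (overInv B) (overConv B A) := by rw [hBA, overConv_unitSer]
      _ = overConv (overConv (overInv B) B) A := (overConv_assoc _ _ _).symm
      _ = A := by rw [hCB, unitSer_overConv]
  exact ⟨B, hB, hCA ▸ hCB, hBA⟩
end

section
/- The set of tree-expanded invertible series with unit constant term, under the convolution induced by the under product on trees, forms a group. -/
/-!
Splitting off the root, `(A ∖ B)_{l ∨ r} = A_| B_{l ∨ r} + Σ_{r = u ∖ v} A_{l ∨ u} B_v`, a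
convolution at the smaller tree `r`. Associativity follows by induction on the tree, and when
`A_| = 1` the same identity can be solved for `B_{l ∨ r}`, giving a right inverse. In a monoid
where every element has a right inverse, right inverses are two-sided.
-/

namespace PBT

variable {R : Type*} [CommRing R]

theorem size_le_of_mem_underFactors {p : PBT × PBT} :
    ∀ {w : PBT}, p ∈ underFactors w → p.2.size ≤ w.size
  | leaf, hp => by simp_all [underFactors]
  | node l r, hp => by
    simp only [underFactors, List.mem_cons, List.mem_map] at hp
    rcases hp with rfl | ⟨q, hq, rfl⟩
    · exact le_rfl
    · have := size_le_of_mem_underFactors hq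
      simp only [size]
      omega

theorem underConv_leaf (A B : PBT → R) : underConv A B leaf = A leaf * B leaf := by
  simp [underConv, underFactors]

theorem underConv_node (A B : PBT → R) (l r : PBT) :
    underConv A B (node l r) =
      A leaf * B (node l r) + underConv (fun u => A (node l u)) B r := by
  simp [underConv, underFactors, Function.comp_def]

theorem underConv_add_left (A A' B : PBT → R) (w : PBT) :
    underConv (A + A') B w = underConv A B w + underConv A' B w := by
  simp only [underConv, Pi.add_apply, add_mul, List.sum_map_add]

theorem underConv_const_mul_left (c : R) (A B : PBT → R) (w : PBT) :
    underConv (fun u => c * A u) B w = c * underConv A B w := by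
  simp only [underConv, mul_assoc, List.sum_map_mul_left]

theorem underConv_assoc (A B C : PBT → R) :
    underConv (underConv A B) C = underConv A (underConv B C) := by
  funext w
  induction w generalizing A with
  | leaf => simp only [underConv_leaf, mul_assoc]
  | node l r _ ih =>
    have hAB : (fun u => underConv A B (node l u)) =
        (fun u => A leaf * B (node l u)) + underConv (fun u => A (node l u)) B :=
      funext fun u => underConv_node A B l u
    rw [underConv_node, underConv_node, underConv_node, underConv_leaf, hAB,
      underConv_add_left, underConv_const_mul_left, ih]
    ring

theorem unitSer_underConv (A : PBT → R) : underConv unitSer A = A := by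
  funext w
  cases w with
  | leaf => simp [underConv_leaf, unitSer]
  | node l r =>
    rw [underConv_node]
    simp [underConv, unitSer]

theorem underConv_unitSer (A : PBT → R) : underConv A unitSer = A := by
  funext w
  induction w generalizing A with
  | leaf => simp [underConv_leaf, unitSer]
  | node l r _ ih => simp [underConv_node, ih, unitSer]

/-- Solves `underConv A B = unitSer` for `B` coefficientwise, using `underConv_node`. -/
def underInv (A : PBT → R) : PBT → R
  | leaf => 1
  | node l r => -((underFactors r).attach.map fun p => A (node l p.1.1) * underInv A p.1.2).sum
termination_by w => w.size
decreasing_by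
  have := size_le_of_mem_underFactors p.2
  simp only [size]
  omega

@[simp]
theorem underInv_leaf (A : PBT → R) : underInv A leaf = 1 := by
  rw [underInv]

theorem underInv_node (A : PBT → R) (l r : PBT) :
    underInv A (node l r) = -underConv (fun u => A (node l u)) (underInv A) r := by
  rw [underInv, underConv]
  exact congrArg (-List.sum ·)
    (List.attach_map_val (f := fun p : PBT × PBT => A (node l p.1) * underInv A p.2))

theorem underConv_underInv (A : PBT → R) (hA : A leaf = 1) :
    underConv A (underInv A) = unitSer := by
  funext w
  cases w with
  | leaf => simp [underConv_leaf, hA, unitSer]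
  | node l r => simp [underConv_node, hA, underInv_node, unitSer]

/-- In a monoid, a right inverse with its own right inverse is two-sided. -/
theorem underInv_underConv (A : PBT → R) (hA : A leaf = 1) :
    underConv (underInv A) A = unitSer := by
  set B := underInv A
  have hB : B leaf = 1 := underInv_leaf A
  have hAC : A = underInv B := calc
    A = underConv A (underConv B (underInv B)) := by
      rw [underConv_underInv B hB, underConv_unitSer]
    _ = underInv B := by
      rw [← underConv_assoc, underConv_underInv A hA, unitSer_underConv]
  rw [hAC]
  exact underConv_underInv B hB

end PBT

open PBT in
/-- tree-expanded series with coefficient `1` on the root tree,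
with the convolution induced by the under product, form a group. -/
theorem group_of_under_series (R : Type*) [CommRing R] :
    (∀ A B : PBT → R, A PBT.leaf = 1 → B PBT.leaf = 1 →
      underConv A B PBT.leaf = 1) ∧
    (∀ A B C : PBT → R, underConv (underConv A B) C = underConv A (underConv B C)) ∧
    (∀ A : PBT → R, underConv (unitSer) A = A ∧ underConv A (unitSer) = A) ∧
    (∀ A : PBT → R, A PBT.leaf = 1 →
      ∃ B : PBT → R, B PBT.leaf = 1 ∧
        underConv A B = unitSer ∧ underConv B A = unitSer) := by
  refine ⟨fun A B hA hB => ?_, underConv_assoc,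
    fun A => ⟨unitSer_underConv A, underConv_unitSer A⟩,
    fun A hA => ⟨underInv A, underInv_leaf A, underConv_underInv A hA, underInv_underConv A hA⟩⟩
  rw [underConv_leaf, hA, hB, one_mul]
end

section
/- The pruning coproduct Δ(t) = Σ_{t = u ∖ v} u ⊗ v makes the free associative algebra on planar binary trees with at least one internal vertex (with the root tree identified with the unit) a Hopf algebra; in particular Δ is coassociative. -/
open PBT in
/-- The pruning coproduct `Δ(t) = Σ_{t = u ∖ v} u ⊗ v`, as an element of the
free module on pairs of trees. -/
noncomputable def pruningDelta (t : PBT) : (PBT × PBT) →₀ ℤ :=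
  ((PBT.underFactors t).map (fun p => Finsupp.single p (1 : ℤ))).sum

/-! Both iterated coproducts of `t` are sums of `u ⊗ v ⊗ w`, over the factorizations
`t = (u ∖ v) ∖ w` and `t = u ∖ (v ∖ w)` respectively. Grafting is associative and
`underFactors` lists every factorization exactly once, so the two sums run over the same set
of triples. -/

theorem Finsupp.sum_list_sum_single_one {α R M : Type*} [AddMonoidWithOne R] [AddCommMonoid M]
    (L : List α) {h : α → R → M} (h_zero : ∀ a, h a 0 = 0)
    (h_add : ∀ a b₁ b₂, h a (b₁ + b₂) = h a b₁ + h a b₂) :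
    ((L.map fun a => Finsupp.single a (1 : R)).sum).sum h = (L.map fun a => h a 1).sum := by
  induction L with
  | nil => simp
  | cons a L ih =>
    rw [List.map_cons, List.sum_cons, Finsupp.sum_add_index' h_zero h_add,
      Finsupp.sum_single_index (h_zero a), ih, List.map_cons, List.sum_cons]

namespace PBT

theorem under_assoc (u v w : PBT) : under (under u v) w = under u (under v w) := by
  induction u with
  | leaf => rfl
  | node l r _ ih => simp only [under, ih]

theorem mem_underFactors {t : PBT} {p : PBT × PBT} :
    p ∈ underFactors t ↔ under p.1 p.2 = t := by
  induction t generalizing p with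
  | leaf =>
    obtain ⟨_ | _, _ | _⟩ := p <;> simp [underFactors, under]
  | node l r _ ih =>
    obtain ⟨_ | ⟨a, b⟩, v⟩ := p <;> simp [underFactors, under, ih, eq_comm, and_comm]

theorem nodup_underFactors (t : PBT) : (underFactors t).Nodup := by
  induction t with
  | leaf => simp [underFactors]
  | node l r _ ih =>
    refine List.nodup_cons.2 ⟨by simp, ih.map fun p q h => ?_⟩
    simp only [Prod.mk.injEq, node.injEq, true_and] at h
    exact Prod.ext h.1 h.2

def underFactorsLeft (t : PBT) : List (PBT × PBT × PBT) :=
  (underFactors t).flatMap fun p => (underFactors p.1).map fun q => (q.1, q.2, p.2)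

def underFactorsRight (t : PBT) : List (PBT × PBT × PBT) :=
  (underFactors t).flatMap fun p => (underFactors p.2).map fun q => (p.1, q.1, q.2)

theorem mem_underFactorsLeft {t : PBT} {x : PBT × PBT × PBT} :
    x ∈ underFactorsLeft t ↔ under (under x.1 x.2.1) x.2.2 = t := by
  obtain ⟨u, v, w⟩ := x
  simp [underFactorsLeft, mem_underFactors]

theorem mem_underFactorsRight {t : PBT} {x : PBT × PBT × PBT} :
    x ∈ underFactorsRight t ↔ under x.1 (under x.2.1 x.2.2) = t := by
  obtain ⟨u, v, w⟩ := x
  simp [underFactorsRight, mem_underFactors]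

theorem nodup_underFactorsLeft (t : PBT) : (underFactorsLeft t).Nodup := by
  refine List.nodup_flatMap.2 ⟨fun p _ => (nodup_underFactors p.1).map fun q q' h => ?_,
    (nodup_underFactors t).pairwise_of_forall_ne fun p _ p' _ hne => ?_⟩
  · simp only [Prod.mk.injEq] at h
    exact Prod.ext h.1 h.2.1
  · refine List.disjoint_left.2 fun x hx hx' => hne ?_
    obtain ⟨q, hq, rfl⟩ := List.mem_map.1 hx
    obtain ⟨q', hq', hqq'⟩ := List.mem_map.1 hx'
    rw [mem_underFactors] at hq hq'
    simp only [Prod.mk.injEq] at hqq'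
    exact Prod.ext (by rw [← hq, ← hq', hqq'.1, hqq'.2.1]) hqq'.2.2.symm

theorem nodup_underFactorsRight (t : PBT) : (underFactorsRight t).Nodup := by
  refine List.nodup_flatMap.2 ⟨fun p _ => (nodup_underFactors p.2).map fun q q' h => ?_,
    (nodup_underFactors t).pairwise_of_forall_ne fun p _ p' _ hne => ?_⟩
  · simp only [Prod.mk.injEq] at h
    exact Prod.ext h.2.1 h.2.2
  · refine List.disjoint_left.2 fun x hx hx' => hne ?_
    obtain ⟨q, hq, rfl⟩ := List.mem_map.1 hx
    obtain ⟨q', hq', hqq'⟩ := List.mem_map.1 hx'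
    rw [mem_underFactors] at hq hq'
    simp only [Prod.mk.injEq] at hqq'
    exact Prod.ext hqq'.1.symm (by rw [← hq, ← hq', hqq'.2.1, hqq'.2.2])

theorem underFactorsLeft_perm_underFactorsRight (t : PBT) :
    (underFactorsLeft t).Perm (underFactorsRight t) :=
  (List.perm_ext_iff_of_nodup (nodup_underFactorsLeft t) (nodup_underFactorsRight t)).2
    fun x => by rw [mem_underFactorsLeft, mem_underFactorsRight, under_assoc]

end PBT

theorem pruningDelta_sum_single {α : Type*} (t : PBT) (f : PBT × PBT → α) :
    (pruningDelta t).sum (fun p d => Finsupp.single (f p) d)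
      = ((PBT.underFactors t).map fun p => Finsupp.single (f p) (1 : ℤ)).sum :=
  Finsupp.sum_list_sum_single_one _ (fun _ => Finsupp.single_zero _)
    fun _ _ _ => Finsupp.single_add _ _ _

theorem pruningDelta_sum_smul {M : Type*} [AddCommGroup M] (t : PBT) (g : PBT × PBT → M) :
    (pruningDelta t).sum (fun p c => c • g p) = ((PBT.underFactors t).map g).sum := by
  rw [pruningDelta, Finsupp.sum_list_sum_single_one (h := fun p c => c • g p) _
    (fun _ => zero_smul _ _) fun _ _ _ => add_smul _ _ _]
  simp only [one_smul]

open PBT in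
/-- the pruning coproduct dual to the under product is
coassociative: `(Δ ⊗ id) ∘ Δ = (id ⊗ Δ) ∘ Δ` on every tree. -/
theorem pruningDelta_coassoc (t : PBT) :
    (pruningDelta t).sum (fun p c =>
      c • ((pruningDelta p.1).sum (fun q d =>
        Finsupp.single ((q.1, q.2, p.2) : PBT × PBT × PBT) d)))
    = (pruningDelta t).sum (fun p c =>
      c • ((pruningDelta p.2).sum (fun q d =>
        Finsupp.single ((p.1, q.1, q.2) : PBT × PBT × PBT) d))) := by
  simp only [pruningDelta_sum_single, pruningDelta_sum_smul]
  have := ((underFactorsLeft_perm_underFactorsRight t).map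
    fun x => Finsupp.single x (1 : ℤ)).sum_eq
  simpa only [underFactorsLeft, underFactorsRight, List.flatMap, List.map_flatten,
    List.sum_flatten, List.map_map, Function.comp_def] using this
end

section
/- In the Tamari lattice on Y_n, any interval [c_{p+q}, t' ∨-composed as t'/t''] with |t'| = p, |t''| = q is isomorphic as a poset to the product of the intervals [c_p, t'] and [c_q, t''] in the Tamari lattices of orders p and q; consequently the Möbius function satisfies μ(c_{p+q}, t'/t'') = μ(c_p, t')·μ(c_q, t''). -/
namespace PBT

/-- `over u v` ("u / v") grafts `u` at the leftmost leaf of `v`. -/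
def overP (u : PBT) : PBT → PBT
  | leaf => u
  | node l r => node (overP u l) r

end PBT

/-!
A right rotation producing `u / v` takes place either inside `u` or inside the copy of `v`,
because `u` hangs from the leftmost leaf of `v`; hence every tree below `u / v` is `x / y`
with `x ≤ u`, `y ≤ v`, and `x` is recovered by cutting the left branch at size `|u|`. So
`z ↦ (x, y)` identifies the lower set of `u / v` with the product of the lower sets of `u` and
`v` (and `c_n` is the minimum of the trees of size `n`). For the Möbius function, `μ(c_n, ·)` is
the unique function whose sums over lower sets are the indicator of `c_n`; the function
`x / y ↦ μ(c_p, x) μ(c_q, y)` has lower sums `[x = c_p][y = c_q] = [x / y = c_{p+q}]`.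
-/

namespace PBT

theorem size_overP (u v : PBT) : size (overP u v) = size u + size v := by
  induction v with
  | leaf => rfl
  | node l r ih => simp only [overP, size, ih]; omega

theorem size_leftComb (n : ℕ) : size (leftComb n) = n := by
  induction n with
  | zero => rfl
  | succ n ih => simp only [leftComb, size, ih]

theorem overP_leftComb (p q : ℕ) : overP (leftComb p) (leftComb q) = leftComb (p + q) := by
  induction q with
  | zero => rfl
  | succ q ih => simp only [leftComb, overP, ih]; rfl

def splitOver (p : ℕ) : PBT → PBT × PBT
  | leaf => (leaf, leaf)
  | node l r =>
    if size (node l r) = p then (node l r, leaf)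
    else ((splitOver p l).1, node (splitOver p l).2 r)

theorem splitOver_overP (u v : PBT) : splitOver (size u) (overP u v) = (u, v) := by
  induction v with
  | leaf => cases u <;> simp [overP, splitOver]
  | node l r ih =>
    have hsize : size (overP u (node l r)) ≠ size u := by
      rw [size_overP]; simp only [size]; omega
    rw [overP] at hsize ⊢
    rw [splitOver, if_neg hsize, ih]

theorem overP_inj {u v u' v' : PBT} (h : overP u v = overP u' v') (hsize : size u = size u') :
    u = u' ∧ v = v' := by
  have := splitOver_overP u v
  rwa [h, hsize, splitOver_overP, Prod.mk.injEq, eq_comm, @eq_comm _ v'] at this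

theorem overP_eq_leftComb_iff {u v : PBT} {p q : ℕ} (hu : size u = p) :
    overP u v = leftComb (p + q) ↔ u = leftComb p ∧ v = leftComb q := by
  refine ⟨fun h => ?_, fun ⟨hu, hv⟩ => hu ▸ hv ▸ overP_leftComb p q⟩
  rw [← overP_leftComb] at h
  exact overP_inj h (by rw [hu, size_leftComb])

theorem TamariStep.size_eq {z w : PBT} (h : TamariStep z w) : size z = size w := by
  induction h with
  | rot => simp only [size]; omega
  | left _ _ ih | right _ _ ih => simp only [size, ih]

theorem tle.size_eq {z w : PBT} (h : tle z w) : size z = size w := by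
  induction h with
  | refl => rfl
  | tail _ hstep ih => exact ih.trans hstep.size_eq

theorem tle.refl (t : PBT) : tle t t := Relation.ReflTransGen.refl

theorem tle.trans {a b c : PBT} (hab : tle a b) (hbc : tle b c) : tle a c :=
  Relation.ReflTransGen.trans hab hbc

theorem tle_node_left {l l' : PBT} (r : PBT) (h : tle l l') : tle (node l r) (node l' r) :=
  Relation.ReflTransGen.lift (fun l => node l r) (fun _ _ => .left r) _ _ h

theorem tle_node_right (l : PBT) {r r' : PBT} (h : tle r r') : tle (node l r) (node l r') :=
  Relation.ReflTransGen.lift (node l) (fun _ _ => .right l) _ _ h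

def weight : PBT → ℕ
  | leaf => 0
  | node l r => weight l + weight r + size r

theorem TamariStep.weight_lt {z w : PBT} (h : TamariStep z w) : weight z < weight w := by
  induction h with
  | rot => simp only [weight, size]; omega
  | left _ _ ih => simp only [weight]; omega
  | right _ hstep ih => simp only [weight, hstep.size_eq]; omega

theorem tle.weight_le {z w : PBT} (h : tle z w) : weight z ≤ weight w := by
  induction h with
  | refl => exact le_rfl
  | tail _ hstep ih => exact ih.trans hstep.weight_lt.le

theorem tle.weight_lt {z w : PBT} (h : tle z w) (hne : z ≠ w) : weight z < weight w := by
  induction h with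
  | refl => exact absurd rfl hne
  | tail h hstep _ => exact (tle.weight_le h).trans_lt hstep.weight_lt

theorem tle.antisymm {z w : PBT} (hzw : tle z w) (hwz : tle w z) : z = w := by
  by_contra hne
  exact (hzw.weight_lt hne).not_ge hwz.weight_le

theorem leftComb_tle_node (a b : ℕ) :
    tle (leftComb (a + b + 1)) (node (leftComb a) (leftComb b)) := by
  induction b with
  | zero => exact tle.refl _
  | succ b ih =>
    exact (tle_node_left leaf ih).tail (.rot (leftComb a) (leftComb b) leaf)

theorem leftComb_tle (t : PBT) : tle (leftComb (size t)) t := by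
  induction t with
  | leaf => exact tle.refl _
  | node l r ihl ihr =>
    exact ((leftComb_tle_node _ _).trans (tle_node_left _ ihl)).trans (tle_node_right l ihr)

theorem leftComb_tle_of_tle {x u : PBT} (h : tle x u) : tle (leftComb (size u)) x :=
  h.size_eq ▸ leftComb_tle x

theorem TamariStep.overP_left {u u' : PBT} (h : TamariStep u u') (v : PBT) :
    TamariStep (overP u v) (overP u' v) := by
  induction v with
  | leaf => exact h
  | node _ r ih => exact .left r ih

theorem TamariStep.overP_right (u : PBT) {v v' : PBT} (h : TamariStep v v') :
    TamariStep (overP u v) (overP u v') := by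
  induction h with
  | rot a b c => exact .rot (overP u a) b c
  | left r _ ih => exact .left r ih
  | right l h _ => exact .right (overP u l) h

theorem tle_overP_overP {u u' v v' : PBT} (hu : tle u u') (hv : tle v v') :
    tle (overP u v) (overP u' v') :=
  (Relation.ReflTransGen.lift (overP · v) (fun _ _ h => h.overP_left v) _ _ hu).trans
    (Relation.ReflTransGen.lift (overP u') (fun _ _ => .overP_right u') _ _ hv)

theorem TamariStep.exists_overP {z u v : PBT} (h : TamariStep z (overP u v)) :
    ∃ x y, z = overP x y ∧ tle x u ∧ tle y v := by
  induction v generalizing z with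
  | leaf => exact ⟨z, leaf, rfl, .single h, tle.refl _⟩
  | node l r ih =>
    rw [overP] at h
    rcases h with ⟨_, b, c⟩ | ⟨_, h⟩ | ⟨_, h⟩
    · exact ⟨u, node (node l b) c, rfl, tle.refl _, .single (.rot l b c)⟩
    · obtain ⟨x, y, rfl, hx, hy⟩ := ih h
      exact ⟨x, node y r, rfl, hx, tle_node_left r hy⟩
    · exact ⟨u, node l _, rfl, tle.refl _, .single (.right l h)⟩

theorem exists_overP_of_tle {z u v : PBT} (h : tle z (overP u v)) :
    ∃ x y, z = overP x y ∧ tle x u ∧ tle y v := by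
  induction h using Relation.ReflTransGen.head_induction_on with
  | refl => exact ⟨u, v, rfl, tle.refl _, tle.refl _⟩
  | head hstep _ ih =>
    obtain ⟨x', y', rfl, hx', hy'⟩ := ih
    obtain ⟨x, y, rfl, hx, hy⟩ := hstep.exists_overP
    exact ⟨x, y, rfl, hx.trans hx', hy.trans hy'⟩

theorem tle_overP_iff {x y x' y' : PBT} (hsize : size x = size x') :
    tle (overP x y) (overP x' y') ↔ tle x x' ∧ tle y y' := by
  refine ⟨fun h => ?_, fun ⟨hx, hy⟩ => tle_overP_overP hx hy⟩
  obtain ⟨u, v, huv, hu, hv⟩ := exists_overP_of_tle h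
  obtain ⟨rfl, rfl⟩ := overP_inj huv (hsize.trans hu.size_eq.symm)
  exact ⟨hu, hv⟩

theorem splitOver_of_tle {z u v : PBT} (h : tle z (overP u v)) :
    overP (splitOver (size u) z).1 (splitOver (size u) z).2 = z ∧
      tle (splitOver (size u) z).1 u ∧ tle (splitOver (size u) z).2 v := by
  obtain ⟨x, y, rfl, hx, hy⟩ := exists_overP_of_tle h
  rw [← hx.size_eq, splitOver_overP]
  exact ⟨rfl, hx, hy⟩


def overIntervalEquiv (u v : PBT) :
    {z // tle (leftComb (size u + size v)) z ∧ tle z (overP u v)} ≃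
      {x // tle (leftComb (size u)) x ∧ tle x u} × {y // tle (leftComb (size v)) y ∧ tle y v} where
  toFun z :=
    (⟨(splitOver (size u) z.1).1, leftComb_tle_of_tle (splitOver_of_tle z.2.2).2.1,
        (splitOver_of_tle z.2.2).2.1⟩,
      ⟨(splitOver (size u) z.1).2, leftComb_tle_of_tle (splitOver_of_tle z.2.2).2.2,
        (splitOver_of_tle z.2.2).2.2⟩)
  invFun xy :=
    ⟨overP xy.1.1 xy.2.1, by
        simpa only [size_overP, xy.1.2.2.size_eq, xy.2.2.2.size_eq] using
          leftComb_tle (overP xy.1.1 xy.2.1),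
      tle_overP_overP xy.1.2.2 xy.2.2.2⟩
  left_inv z := Subtype.ext (splitOver_of_tle z.2.2).1
  right_inv xy := by
    have hsplit := splitOver_overP xy.1.1 xy.2.1
    rw [xy.1.2.2.size_eq] at hsplit
    ext <;> simp only [hsplit]

theorem tle_iff_overIntervalEquiv {u v : PBT}
    (a b : {z // tle (leftComb (size u + size v)) z ∧ tle z (overP u v)}) :
    tle a.1 b.1 ↔ tle (overIntervalEquiv u v a).1.1 (overIntervalEquiv u v b).1.1 ∧
      tle (overIntervalEquiv u v a).2.1 (overIntervalEquiv u v b).2.1 := by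
  obtain ⟨ha, hau, -⟩ := splitOver_of_tle a.2.2
  obtain ⟨hb, hbu, -⟩ := splitOver_of_tle b.2.2
  conv_lhs => rw [← ha, ← hb]
  exact tle_overP_iff (hau.size_eq.trans hbu.size_eq.symm)

theorem mem_treesOfSize (n : ℕ) (t : PBT) : t ∈ treesOfSize n ↔ size t = n := by
  induction n using Nat.strong_induction_on generalizing t with
  | _ n ih =>
    rcases n with _ | n
    · cases t <;> simp [treesOfSize, size]
    rw [treesOfSize]
    simp only [List.mem_flatMap, List.mem_map, List.mem_attach, true_and, Subtype.exists,
      List.mem_range]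
    constructor
    · rintro ⟨i, hi, l, hl, r, hr, rfl⟩
      rw [ih i (by omega)] at hl
      rw [ih (n - i) (by omega)] at hr
      simp only [size]; omega
    · intro ht
      cases t with
      | leaf => simp [size] at ht
      | node l r =>
        simp only [size] at ht
        exact ⟨size l, by omega, l, (ih _ (by omega) l).mpr rfl, r,
          (ih _ (by omega) r).mpr (by omega), rfl⟩

theorem nodup_treesOfSize (n : ℕ) : (treesOfSize n).Nodup := by
  induction n using Nat.strong_induction_on with
  | _ n ih =>
    rcases n with _ | n
    · simp [treesOfSize]
    rw [treesOfSize, List.nodup_flatMap]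
    constructor
    · rintro ⟨i, hi⟩ -
      rw [List.nodup_flatMap]
      refine ⟨fun l _ => (ih (n - i) (by omega)).map fun r r' h => by injection h, ?_⟩
      refine (ih i (by simpa using hi)).imp fun hne => List.disjoint_left.mpr ?_
      simp only [List.mem_map]
      rintro _ ⟨r, -, rfl⟩ ⟨r', -, h⟩
      injection h with h
      exact hne h.symm
    · refine (List.nodup_attach.mpr List.nodup_range).imp fun hne => List.disjoint_left.mpr ?_
      simp only [List.mem_flatMap, List.mem_map]
      rintro _ ⟨l, hl, r, -, rfl⟩ ⟨l', hl', r', -, h⟩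
      injection h with h
      rw [mem_treesOfSize] at hl hl'
      exact hne (Subtype.ext (hl.symm.trans (h ▸ hl')))

open Classical in
noncomputable def lowerInterval (t : PBT) : Finset PBT :=
  (treesOfSize (size t)).toFinset.filter (tle · t)

theorem mem_lowerInterval {z t : PBT} : z ∈ lowerInterval t ↔ tle z t := by
  simp only [lowerInterval, Finset.mem_filter, List.mem_toFinset, mem_treesOfSize,
    and_iff_right_iff_imp]
  exact tle.size_eq

theorem lowerInterval_overP (u v : PBT) :
    lowerInterval (overP u v) =
      (lowerInterval u ×ˢ lowerInterval v).image fun xy => overP xy.1 xy.2 := by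
  ext z
  simp only [Finset.mem_image, Finset.mem_product, mem_lowerInterval, Prod.exists]
  constructor
  · rintro h
    obtain ⟨x, y, rfl, hx, hy⟩ := exists_overP_of_tle h
    exact ⟨x, y, ⟨hx, hy⟩, rfl⟩
  · rintro ⟨x, y, ⟨hx, hy⟩, rfl⟩
    exact tle_overP_overP hx hy

theorem sum_lowerInterval_overP {M : Type*} [AddCommMonoid M] (f : PBT → M) (u v : PBT) :
    ∑ z ∈ lowerInterval (overP u v), f z =
      ∑ x ∈ lowerInterval u, ∑ y ∈ lowerInterval v, f (overP x y) := by
  rw [lowerInterval_overP, Finset.sum_image, Finset.sum_product]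
  rintro ⟨x, y⟩ hxy ⟨x', y'⟩ hxy' h
  simp only [Finset.coe_product, Set.mem_prod, Finset.mem_coe, mem_lowerInterval] at hxy hxy'
  obtain ⟨rfl, rfl⟩ := overP_inj h (hxy.1.size_eq.trans hxy'.1.size_eq.symm)
  rfl

theorem eq_of_sum_lowerInterval_eq {M : Type*} [AddCommGroup M] {f g : PBT → M} {T : PBT}
    (h : ∀ t, tle t T → ∑ z ∈ lowerInterval t, f z = ∑ z ∈ lowerInterval t, g z) :
    f T = g T := by
  induction hw : weight T using Nat.strong_induction_on generalizing T with
  | _ n ih =>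
    have hT : T ∈ lowerInterval T := mem_lowerInterval.mpr (tle.refl T)
    have hbelow : ∀ z ∈ (lowerInterval T).erase T, f z = g z := fun z hz => by
      obtain ⟨hne, hz⟩ := Finset.mem_erase.mp hz
      rw [mem_lowerInterval] at hz
      exact ih _ (hw ▸ hz.weight_lt hne) (fun t ht => h t (ht.trans hz)) rfl
    have hsum := h T (tle.refl T)
    rw [← Finset.add_sum_erase _ _ hT, ← Finset.add_sum_erase _ _ hT,
      Finset.sum_congr rfl hbelow] at hsum
    exact add_right_cancel hsum

theorem lowerInterval_leftComb (n : ℕ) : lowerInterval (leftComb n) = {leftComb n} := by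
  ext z
  rw [mem_lowerInterval, Finset.mem_singleton]
  refine ⟨fun h => h.antisymm ?_, fun h => h ▸ tle.refl _⟩
  simpa only [size_leftComb] using leftComb_tle_of_tle h

open Classical in
theorem sum_lowerInterval_mobius {μ : PBT → PBT → ℤ} (hμrefl : ∀ t : PBT, μ t t = 1)
    (hμsum : ∀ s t : PBT, s ≠ t → tle s t →
      ((treesOfSize (size t)).map
        (fun z => if tle s z ∧ tle z t then μ s z else 0)).sum = 0)
    {t : PBT} {n : ℕ} (ht : size t = n) :
    ∑ z ∈ lowerInterval t, μ (leftComb n) z = if t = leftComb n then 1 else 0 := by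
  subst ht
  split_ifs with hmin
  · rw [hmin, size_leftComb, lowerInterval_leftComb, Finset.sum_singleton, hμrefl]
  have hsum := hμsum _ t (Ne.symm hmin) (leftComb_tle t)
  rw [← List.sum_toFinset _ (nodup_treesOfSize _)] at hsum
  rw [lowerInterval, Finset.sum_filter]
  refine Eq.trans (Finset.sum_congr rfl fun z hz => ?_) hsum
  rw [List.mem_toFinset, mem_treesOfSize] at hz
  simp only [hz ▸ leftComb_tle z, true_and]

open Classical in
theorem mobius_overP {μ : PBT → PBT → ℤ} (hμrefl : ∀ t : PBT, μ t t = 1)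
    (hμsum : ∀ s t : PBT, s ≠ t → tle s t →
      ((treesOfSize (size t)).map
        (fun z => if tle s z ∧ tle z t then μ s z else 0)).sum = 0)
    (u v : PBT) :
    μ (leftComb (size u + size v)) (overP u v) =
      μ (leftComb (size u)) u * μ (leftComb (size v)) v := by
  let g z := μ (leftComb (size u)) (splitOver (size u) z).1 *
    μ (leftComb (size v)) (splitOver (size u) z).2
  suffices μ (leftComb (size u + size v)) (overP u v) = g (overP u v) by
    simpa only [g, splitOver_overP] using this
  refine eq_of_sum_lowerInterval_eq fun t ht => ?_
  obtain ⟨x, y, rfl, hx, hy⟩ := exists_overP_of_tle ht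
  have hg : ∀ x' ∈ lowerInterval x, ∀ y' ∈ lowerInterval y,
      g (overP x' y') = μ (leftComb (size u)) x' * μ (leftComb (size v)) y' := by
    intro x' hx' y' _
    rw [mem_lowerInterval] at hx'
    simp only [g, ← (hx'.trans hx).size_eq, splitOver_overP]
  calc ∑ z ∈ lowerInterval (overP x y), μ (leftComb (size u + size v)) z
      = if overP x y = leftComb (size u + size v) then 1 else 0 :=
        sum_lowerInterval_mobius hμrefl hμsum (by rw [size_overP, hx.size_eq, hy.size_eq])
    _ = (if x = leftComb (size u) then 1 else 0) * (if y = leftComb (size v) then 1 else 0) := by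
        simp only [ite_zero_mul_ite_zero, overP_eq_leftComb_iff hx.size_eq, one_mul]
    _ = ∑ x' ∈ lowerInterval x, ∑ y' ∈ lowerInterval y,
          μ (leftComb (size u)) x' * μ (leftComb (size v)) y' := by
        rw [← Finset.sum_mul_sum, sum_lowerInterval_mobius hμrefl hμsum hx.size_eq,
          sum_lowerInterval_mobius hμrefl hμsum hy.size_eq]
    _ = ∑ z ∈ lowerInterval (overP x y), g z := by
        rw [sum_lowerInterval_overP]
        exact (Finset.sum_congr rfl fun x' hx' => Finset.sum_congr rfl (hg x' hx')).symm

end PBT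

open PBT in
open Classical in
theorem tamari_interval_product_general (μ : PBT → PBT → ℤ)
    (hμrefl : ∀ t : PBT, μ t t = 1)
    (hμsum : ∀ s t : PBT, s ≠ t → tle s t →
      ((treesOfSize (size t)).map
        (fun z => if tle s z ∧ tle z t then μ s z else 0)).sum = 0)
    (p q : ℕ) (t' t'' : PBT) (hp : size t' = p) (hq : size t'' = q) :
    (∃ e : {z : PBT // tle (leftComb (p + q)) z ∧ tle z (overP t' t'')} ≃
        ({z : PBT // tle (leftComb p) z ∧ tle z t'} ×
         {z : PBT // tle (leftComb q) z ∧ tle z t''}),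
      ∀ a b, tle a.1 b.1 ↔
        (tle (e a).1.1 (e b).1.1 ∧ tle (e a).2.1 (e b).2.1)) ∧
    μ (leftComb (p + q)) (overP t' t'') = μ (leftComb p) t' * μ (leftComb q) t'' := by
  subst hp hq
  exact ⟨⟨overIntervalEquiv t' t'', tle_iff_overIntervalEquiv⟩, mobius_overP hμrefl hμsum t' t''⟩

open PBT in
open Classical in
/-- the Tamari interval `[c_{p+q}, t' / t'']`, where
`|t'| = p` and `|t''| = q`, is isomorphic as a poset to the product of the
Tamari intervals `[c_p, t']` and `[c_q, t'']`; consequently the Möbius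
function of the Tamari order satisfies
`μ(c_{p+q}, t'/t'') = μ(c_p, t') · μ(c_q, t'')`. -/
theorem tamari_interval_product (μ : PBT → PBT → ℤ)
    (hμrefl : ∀ t : PBT, μ t t = 1)
    (hμnot : ∀ s t : PBT, ¬ tle s t → μ s t = 0)
    (hμsum : ∀ s t : PBT, s ≠ t → tle s t →
      ((treesOfSize (size t)).map
        (fun z => if tle s z ∧ tle z t then μ s z else 0)).sum = 0)
    (p q : ℕ) (t' t'' : PBT) (hp : size t' = p) (hq : size t'' = q) :
    (∃ e : {z : PBT // tle (leftComb (p + q)) z ∧ tle z (overP t' t'')} ≃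
        ({z : PBT // tle (leftComb p) z ∧ tle z t'} ×
         {z : PBT // tle (leftComb q) z ∧ tle z t''}),
      ∀ a b, tle a.1 b.1 ↔
        (tle (e a).1.1 (e b).1.1 ∧ tle (e a).2.1 (e b).2.1)) ∧
    μ (leftComb (p + q)) (overP t' t'') = μ (leftComb p) t' * μ (leftComb q) t'' :=
  tamari_interval_product_general μ hμrefl hμsum p q t' t'' hp hq
end
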